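/- arXiv:0902.2484 — 2 statements merged into one kernel-verified Lean document; each statement's English description precedes it below -/
import Mathlib

section
/- Let (λ_n)_{n∈ℕ} be a nondecreasing sequence of real numbers tending to +∞, and suppose there exists β₀ > 0 such that Σ_n e^{−β₀·λ_n} converges. Let μ be a real number with μ ≠ λ_n for every n, and let N(μ) = #{n : λ_n < μ} (a finite number since λ_n → ∞). Then the sums Σ_n 1/(e^{β(λ_n−μ)} + 1) converge for all sufficiently large β > 0, and lim_{β→∞} Σ_n 1/(e^{β(λ_n−μ)} + 1) = N(μ). -/
/-!
Each term `1 / (exp (β * (λₙ - μ)) + 1)` tends to `1` or `0` as `β → ∞` according as `λₙ < μ`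
or `λₙ > μ`, and for `β ≥ β₀` it is bounded by `exp (-β₀ * (λₙ - μ))` (by `1` when `λₙ < μ`,
by `exp (-β * (λₙ - μ))` otherwise), which is summable. Dominated convergence for series
(Tannery's theorem) turns the sum of the limits, `∑ₙ 1_{λₙ < μ} = N(μ)`, into the limit of the sums.
-/

open Real Filter Topology Set

lemma one_div_exp_add_one_le_one (x : ℝ) : 1 / (exp x + 1) ≤ 1 := by
  rw [div_le_one (by positivity)]
  linarith [exp_pos x]

lemma one_div_exp_add_one_le_exp_neg (x : ℝ) : 1 / (exp x + 1) ≤ exp (-x) := by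
  rw [exp_neg, ← one_div]
  exact one_div_le_one_div_of_le (exp_pos x) (by linarith)

lemma one_div_exp_mul_add_one_le_exp_neg_mul {b β : ℝ} (hb : 0 ≤ b) (hbβ : b ≤ β) (x : ℝ) :
    1 / (exp (β * x) + 1) ≤ exp (-(b * x)) := by
  rcases lt_or_ge x 0 with hx | hx
  · calc 1 / (exp (β * x) + 1) ≤ 1 := one_div_exp_add_one_le_one _
      _ ≤ exp (-(b * x)) := one_le_exp (by nlinarith)
  · calc 1 / (exp (β * x) + 1) ≤ exp (-(β * x)) := one_div_exp_add_one_le_exp_neg _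
      _ ≤ exp (-(b * x)) := exp_le_exp.2 (by nlinarith)

lemma tendsto_one_div_exp_mul_add_one_of_neg {x : ℝ} (hx : x < 0) :
    Tendsto (fun β => 1 / (exp (β * x) + 1)) atTop (𝓝 1) := by
  have hexp : Tendsto (fun β => exp (β * x)) atTop (𝓝 0) :=
    tendsto_exp_atBot.comp (tendsto_id.atTop_mul_const_of_neg hx)
  simpa using (hexp.add_const 1).inv₀ (by norm_num)

lemma tendsto_one_div_exp_mul_add_one_of_pos {x : ℝ} (hx : 0 < x) :
    Tendsto (fun β => 1 / (exp (β * x) + 1)) atTop (𝓝 0) := by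
  have hexp : Tendsto (fun β => exp (β * x) + 1) atTop atTop :=
    tendsto_atTop_add_const_right _ 1 (tendsto_exp_atTop.comp (tendsto_id.atTop_mul_const hx))
  simp only [one_div]
  exact hexp.inv_tendsto_atTop

lemma tendsto_one_div_exp_mul_sub_add_one {x μ : ℝ} (hx : x ≠ μ) :
    Tendsto (fun β => 1 / (exp (β * (x - μ)) + 1)) atTop (𝓝 ((Iio μ).indicator 1 x)) := by
  rcases hx.lt_or_gt with hx | hx
  · simpa [indicator_of_mem (mem_Iio.2 hx)] using
      tendsto_one_div_exp_mul_add_one_of_neg (sub_neg.2 hx)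
  · simpa [indicator_of_notMem (notMem_Iio.2 hx.le)] using
      tendsto_one_div_exp_mul_add_one_of_pos (sub_pos.2 hx)

-- Also for infinite `s`: both sides are then `0` by the junk-value conventions.
lemma tsum_indicator_one_eq_natCard {α R : Type*} [AddCommGroupWithOne R] [TopologicalSpace R]
    [IsTopologicalAddGroup R] [T2Space R] (s : Set α) :
    ∑' a, s.indicator 1 a = (Nat.card s : R) := by
  rw [← tsum_subtype, Pi.one_def, tsum_const, nsmul_one]

theorem counting_function_as_limit_general
    (lam : ℕ → ℝ)
    (β₀ : ℝ) (hβ₀ : 0 < β₀)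
    (hsum : Summable fun n => Real.exp (-β₀ * lam n))
    (μ : ℝ) (hμ : ∀ n, μ ≠ lam n) :
    (∀ᶠ β in Filter.atTop, Summable fun n => 1 / (Real.exp (β * (lam n - μ)) + 1)) ∧
    Filter.Tendsto
      (fun β : ℝ => ∑' n, 1 / (Real.exp (β * (lam n - μ)) + 1))
      Filter.atTop
      (nhds ((Nat.card {n : ℕ | lam n < μ} : ℝ))) := by
  have hdom : Summable fun n => exp (-(β₀ * (lam n - μ))) := by
    refine (hsum.mul_left (exp (β₀ * μ))).congr fun n => ?_
    rw [← exp_add]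
    ring_nf
  have hbound : ∀ᶠ β in atTop, ∀ n,
      ‖1 / (exp (β * (lam n - μ)) + 1)‖ ≤ exp (-(β₀ * (lam n - μ))) := by
    filter_upwards [eventually_ge_atTop β₀] with β hβ n
    rw [norm_of_nonneg (by positivity)]
    exact one_div_exp_mul_add_one_le_exp_neg_mul hβ₀.le hβ _
  refine ⟨hbound.mono fun β hβ => hdom.of_norm_bounded hβ, ?_⟩
  rw [← tsum_indicator_one_eq_natCard]
  exact tendsto_tsum_of_dominated_convergence hdom
    (fun n => tendsto_one_div_exp_mul_sub_add_one (hμ n).symm) hbound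

/-- For a nondecreasing real sequence `lam` tending to `+∞` with
`∑ n, exp (-β₀ * lam n)` summable for some `β₀ > 0`, and `μ` avoiding all `lam n`,
the sums `∑ n, 1 / (exp (β * (lam n - μ)) + 1)` are summable for all sufficiently
large `β` and tend, as `β → ∞`, to the counting function `N(μ) = #{n | lam n < μ}`. -/
theorem counting_function_as_limit
    (lam : ℕ → ℝ) (hmono : Monotone lam)
    (htend : Filter.Tendsto lam Filter.atTop Filter.atTop)
    (β₀ : ℝ) (hβ₀ : 0 < β₀)
    (hsum : Summable fun n => Real.exp (-β₀ * lam n))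
    (μ : ℝ) (hμ : ∀ n, μ ≠ lam n) :
    (∀ᶠ β in Filter.atTop, Summable fun n => 1 / (Real.exp (β * (lam n - μ)) + 1)) ∧
    Filter.Tendsto
      (fun β : ℝ => ∑' n, 1 / (Real.exp (β * (lam n - μ)) + 1))
      Filter.atTop
      (nhds ((Nat.card {n : ℕ | lam n < μ} : ℝ))) :=
  counting_function_as_limit_general lam β₀ hβ₀ hsum μ hμ
end

section
/- (Generalized Abel partial summation.) Let (λ_n)_{n≥1} be a nondecreasing sequence of real numbers tending to +∞, let b : ℕ → ℂ be arbitrary complex numbers, and define B(u) = Σ_{n : λ_n ≤ u} b(n) (a finite sum for each real u). Let 0 ≤ u₁ < u₂ be reals with λ_1 ≤ u₂, and let f be a continuously differentiable complex-valued function on [u₁, u₂]. Then Σ_{n : u₁ < λ_n ≤ u₂} b(n) f(λ_n) = B(u₂) f(u₂) − B(u₁) f(u₁) − ∫_{u₁}^{u₂} B(u) f′(u) du. -/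
/-!
Only the finitely many `n` with `λ_n ≤ u₂` matter, so on `[u₁, u₂]` the function `B` is a finite
linear combination of the steps `u ↦ [λ_n ≤ u]`, and both sides of the formula are linear in this
combination. For a single step at `x` the integral of `[x ≤ u] f' u` over `[u₁, u₂]` is
`f u₂ - f (max u₁ x)` by the fundamental theorem of calculus (or `0` when `x > u₂`), which is the
formula for one term.
-/

open MeasureTheory Set Filter

theorem finite_setOf_le_of_tendsto_atTop {β : Type*} [LinearOrder β] [NoMaxOrder β]
    {lam : ℕ → β} (h : Tendsto lam atTop atTop) (x : β) : {n | lam n ≤ x}.Finite := by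
  have hgt := h.eventually_gt_atTop x
  rw [← Nat.cofinite_eq_atTop, eventually_cofinite] at hgt
  simpa only [not_lt] using hgt

theorem finsum_mem_eq_sum_ite_of_subset {α M : Type*} [AddCommMonoid M] {s : Set α}
    {t : Finset α} [DecidablePred (· ∈ s)] (h : s ⊆ t) (g : α → M) :
    ∑ᶠ i ∈ s, g i = ∑ i ∈ t, if i ∈ s then g i else 0 := by
  rw [← Finset.sum_filter]
  refine finsum_mem_eq_sum_of_subset g (fun i hi => ?_) fun i hi => ?_
  · exact Finset.mem_filter.2 ⟨h hi.1, hi.1⟩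
  · exact (Finset.mem_filter.1 hi).2

theorem IntervalIntegrable.ite_le {E : Type*} [NormedAddCommGroup E] {μ : Measure ℝ}
    {g : ℝ → E} {a b : ℝ} (hg : IntervalIntegrable g μ a b) (x : ℝ) :
    IntervalIntegrable (fun u => if x ≤ u then g u else 0) μ a b := by
  have hind : (fun u => if x ≤ u then g u else 0) = (Ici x).indicator g := by
    ext u; simp only [indicator_apply, mem_Ici]
  rw [hind, intervalIntegrable_iff]
  exact (intervalIntegrable_iff.1 hg).indicator measurableSet_Ici

section IntervalIntegral

variable {E : Type*} [NormedAddCommGroup E] [NormedSpace ℝ E] [CompleteSpace E]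
  {f f' : ℝ → E} {u₁ u₂ : ℝ}

theorem integral_eq_sub_of_hasDerivWithinAt_Icc
    (hf : ∀ u ∈ Icc u₁ u₂, HasDerivWithinAt f (f' u) (Icc u₁ u₂) u)
    (hf' : IntervalIntegrable f' volume u₁ u₂) {a b : ℝ} (ha : u₁ ≤ a) (hab : a ≤ b)
    (hb : b ≤ u₂) : ∫ u in a..b, f' u = f b - f a := by
  have hsub : Icc a b ⊆ Icc u₁ u₂ := Icc_subset_Icc ha hb
  refine intervalIntegral.integral_eq_sub_of_hasDerivAt_of_le hab
    (fun u hu => (hf u (hsub hu)).continuousWithinAt.mono hsub) (fun u hu => ?_)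
    (hf'.mono_set ?_)
  · exact (hf u (hsub (Ioo_subset_Icc_self hu))).hasDerivAt
      (Icc_mem_nhds (ha.trans_lt hu.1) (hu.2.trans_le hb))
  · simpa only [uIcc_of_le hab, uIcc_of_le (ha.trans (hab.trans hb))] using hsub

theorem integral_ite_le_eq (hle : u₁ ≤ u₂)
    (hf : ∀ u ∈ Icc u₁ u₂, HasDerivWithinAt f (f' u) (Icc u₁ u₂) u)
    (hf' : IntervalIntegrable f' volume u₁ u₂) (x : ℝ) :
    ∫ u in u₁..u₂, (if x ≤ u then f' u else 0) =
      if x ≤ u₁ then f u₂ - f u₁ else if x ≤ u₂ then f u₂ - f x else 0 := by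
  have hstep := hf'.ite_le x
  rcases le_or_gt x u₁ with hx₁ | hx₁
  · rw [if_pos hx₁, ← integral_eq_sub_of_hasDerivWithinAt_Icc hf hf' le_rfl hle le_rfl]
    refine intervalIntegral.integral_congr fun u hu => ?_
    rw [uIcc_of_le hle] at hu
    exact if_pos (hx₁.trans hu.1)
  rw [if_neg hx₁.not_ge]
  rcases le_or_gt x u₂ with hx₂ | hx₂
  · have hx : x ∈ uIcc u₁ u₂ := by rw [uIcc_of_le hle]; exact ⟨hx₁.le, hx₂⟩
    rw [if_pos hx₂, ← intervalIntegral.integral_add_adjacent_intervals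
      (hstep.mono_set (uIcc_subset_uIcc_left hx)) (hstep.mono_set (uIcc_subset_uIcc_right hx)),
      ← integral_eq_sub_of_hasDerivWithinAt_Icc hf hf' hx₁.le hx₂ le_rfl]
    have hbelow : ∫ u in u₁..x, (if x ≤ u then f' u else 0) = 0 := by
      refine intervalIntegral.integral_zero_ae ?_
      filter_upwards [Measure.ae_ne volume x] with u hux hu
      rw [uIoc_of_le hx₁.le] at hu
      exact if_neg (lt_of_le_of_ne hu.2 hux).not_ge
    have habove : ∫ u in x..u₂, (if x ≤ u then f' u else 0) = ∫ u in x..u₂, f' u := by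
      refine intervalIntegral.integral_congr fun u hu => ?_
      rw [uIcc_of_le hx₂] at hu
      exact if_pos hu.1
    rw [hbelow, habove, zero_add]
  · rw [if_neg hx₂.not_ge]
    refine intervalIntegral.integral_zero_ae (Eventually.of_forall fun u hu => ?_)
    rw [uIoc_of_le hle] at hu
    exact if_neg (hu.2.trans_lt hx₂).not_ge

end IntervalIntegral

section Complex

variable {f f' : ℝ → ℂ} {u₁ u₂ : ℝ}

theorem ite_mul_eq_sub_sub_integral_mul (hle : u₁ ≤ u₂)
    (hf : ∀ u ∈ Icc u₁ u₂, HasDerivWithinAt f (f' u) (Icc u₁ u₂) u)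
    (hf' : IntervalIntegrable f' volume u₁ u₂) (x : ℝ) (c : ℂ) :
    (if u₁ < x ∧ x ≤ u₂ then c * f x else 0) =
      (if x ≤ u₂ then c else 0) * f u₂ - (if x ≤ u₁ then c else 0) * f u₁ -
        ∫ u in u₁..u₂, (if x ≤ u then c else 0) * f' u := by
  simp_rw [ite_zero_mul, integral_ite_le_eq hle (fun u hu => (hf u hu).const_mul c)
    (hf'.const_mul c) x]
  rcases le_or_gt x u₁ with hx₁ | hx₁
  · simp [hx₁, hx₁.trans hle, not_lt.2 hx₁]
  rcases le_or_gt x u₂ with hx₂ | hx₂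
  · simp [hx₁, hx₂, not_le.2 hx₁]
  · simp [not_le.2 hx₁, not_le.2 hx₂]

theorem sum_ite_mul_eq_sub_sub_integral_mul {ι : Type*} (hle : u₁ ≤ u₂)
    (hf : ∀ u ∈ Icc u₁ u₂, HasDerivWithinAt f (f' u) (Icc u₁ u₂) u)
    (hf' : IntervalIntegrable f' volume u₁ u₂) (T : Finset ι) (lam : ι → ℝ) (b : ι → ℂ) :
    ∑ n ∈ T, (if u₁ < lam n ∧ lam n ≤ u₂ then b n * f (lam n) else 0) =
      (∑ n ∈ T, if lam n ≤ u₂ then b n else 0) * f u₂ -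
        (∑ n ∈ T, if lam n ≤ u₁ then b n else 0) * f u₁ -
          ∫ u in u₁..u₂, (∑ n ∈ T, if lam n ≤ u then b n else 0) * f' u := by
  simp_rw [Finset.sum_mul]
  rw [intervalIntegral.integral_finsetSum fun n _ => ?_, ← Finset.sum_sub_distrib,
    ← Finset.sum_sub_distrib]
  · exact Finset.sum_congr rfl fun n _ => ite_mul_eq_sub_sub_integral_mul hle hf hf' (lam n) (b n)
  · simpa only [ite_zero_mul] using (hf'.const_mul (b n)).ite_le (lam n)

end Complex

theorem generalized_abel_summation_general
    (lam : ℕ → ℝ)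
    (htend : Filter.Tendsto lam Filter.atTop Filter.atTop)
    (b : ℕ → ℂ)
    (B : ℝ → ℂ)
    (hB : ∀ u : ℝ, B u = ∑ᶠ n ∈ {n : ℕ | 1 ≤ n ∧ lam n ≤ u}, b n)
    (u₁ u₂ : ℝ) (hu₁₂ : u₁ < u₂)
    (f f' : ℝ → ℂ)
    (hf : ∀ u ∈ Set.Icc u₁ u₂, HasDerivWithinAt f (f' u) (Set.Icc u₁ u₂) u)
    (hf' : ContinuousOn f' (Set.Icc u₁ u₂)) :
    ∑ᶠ n ∈ {n : ℕ | 1 ≤ n ∧ u₁ < lam n ∧ lam n ≤ u₂}, b n * f (lam n) =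
      B u₂ * f u₂ - B u₁ * f u₁ - ∫ u in u₁..u₂, B u * f' u := by
  classical
  have hfin : {n : ℕ | 1 ≤ n ∧ lam n ≤ u₂}.Finite :=
    (finite_setOf_le_of_tendsto_atTop htend u₂).subset fun n hn => hn.2
  set T := hfin.toFinset
  have hT : ∀ {p : ℕ → Prop} [DecidablePred p], (∀ n, p n → lam n ≤ u₂) → ∀ g : ℕ → ℂ,
      ∑ᶠ n ∈ {n : ℕ | 1 ≤ n ∧ p n}, g n = ∑ n ∈ T, if p n then g n else 0 := by
    intro p _ hp g
    rw [finsum_mem_eq_sum_ite_of_subset fun n hn => hfin.mem_toFinset.2 ⟨hn.1, hp n hn.2⟩]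
    refine Finset.sum_congr rfl fun n hn => ?_
    simp only [mem_ofPred_eq, (hfin.mem_toFinset.1 hn).1, true_and]
  have hBT : ∀ u ≤ u₂, B u = ∑ n ∈ T, if lam n ≤ u then b n else 0 := fun u hu =>
    (hB u).trans (hT (fun n hn => hn.trans hu) b)
  have hInt : ∫ u in u₁..u₂, B u * f' u =
      ∫ u in u₁..u₂, (∑ n ∈ T, if lam n ≤ u then b n else 0) * f' u :=
    intervalIntegral.integral_congr fun u hu => by
      rw [uIcc_of_le hu₁₂.le] at hu
      rw [hBT u hu.2]
  rw [hT (fun n hn => hn.2), hBT u₂ le_rfl, hBT u₁ hu₁₂.le, hInt]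
  exact sum_ite_mul_eq_sub_sub_integral_mul hu₁₂.le hf (hf'.intervalIntegrable_of_Icc hu₁₂.le) T
    lam b

/-- Generalized Abel partial summation: for a nondecreasing real
sequence `(lam n)_{n ≥ 1}` tending to `+∞`, arbitrary complex `b n`, partial sums
`B(u) = ∑_{n ≥ 1, lam n ≤ u} b n`, reals `0 ≤ u₁ < u₂` with `lam 1 ≤ u₂`, and a
continuously differentiable `f` on `[u₁, u₂]`:
`∑_{u₁ < lam n ≤ u₂} b n * f (lam n)
  = B(u₂) f(u₂) − B(u₁) f(u₁) − ∫_{u₁}^{u₂} B(u) f'(u) du`. -/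
theorem generalized_abel_summation
    (lam : ℕ → ℝ) (hmono : Monotone lam)
    (htend : Filter.Tendsto lam Filter.atTop Filter.atTop)
    (b : ℕ → ℂ)
    (B : ℝ → ℂ)
    (hB : ∀ u : ℝ, B u = ∑ᶠ n ∈ {n : ℕ | 1 ≤ n ∧ lam n ≤ u}, b n)
    (u₁ u₂ : ℝ) (hu₁ : 0 ≤ u₁) (hu₁₂ : u₁ < u₂) (hlam : lam 1 ≤ u₂)
    (f f' : ℝ → ℂ)
    (hf : ∀ u ∈ Set.Icc u₁ u₂, HasDerivWithinAt f (f' u) (Set.Icc u₁ u₂) u)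
    (hf' : ContinuousOn f' (Set.Icc u₁ u₂)) :
    ∑ᶠ n ∈ {n : ℕ | 1 ≤ n ∧ u₁ < lam n ∧ lam n ≤ u₂}, b n * f (lam n) =
      B u₂ * f u₂ - B u₁ * f u₁ - ∫ u in u₁..u₂, B u * f' u :=
  generalized_abel_summation_general lam htend b B hB u₁ u₂ hu₁₂ f f' hf hf'
end
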